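/- (Lower bound in Pick's theorem) If f is a bounded holomorphic function on the unit disk with f(λ_i) = w_i for distinct λ_1,…,λ_n in the disk, then for all complex α_1,…,α_n: ∑_{i,j} conj(α_i) α_j conj(w_i) w_j / (1 − conj(λ_i) λ_j) ≤ ‖f‖²_∞ · ∑_{i,j} conj(α_i) α_j / (1 − conj(λ_i) λ_j). -/

import Mathlib

/-!
Write `⟨u, v⟩` for the average of `u * conj v` over the unit circle and `k_a z = (1 - conj a * z)⁻¹`
for the Szegő kernel. On the circle `conj (k_a z) = z / (z - a)`, so Cauchy's formula is the
reproducing property `⟨u, k_a⟩ = u a` for `u` holomorphic near the closed disk; in particular the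
Pick form of `β` is `‖∑ j, conj (β j) • k_{λ j}‖²`. For `h = ∑ j, conj (α j) • k_{λ j}` and
`g = ∑ j, conj (α j * u (λ j)) • k_{λ j}` reproducing twice gives `‖g‖² = ⟨u g, h⟩` (that is,
`g` is the image of `h` under the adjoint of multiplication by `u`), and the pointwise bound
`2 Re (u g conj h) ≤ |g|² + M² |h|²` for `|u| ≤ M` yields `‖g‖² ≤ M² ‖h‖²`. A bounded `f` on the
open disk is handled through its dilations `z ↦ f (r z)`, letting `r → 1`.
-/

open scoped ComplexConjugate ComplexOrder
open Metric Real Filter Topology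

noncomputable def szegoKernel (a z : ℂ) : ℂ := (1 - conj a * z)⁻¹

lemma one_sub_conj_mul_ne_zero {a z : ℂ} (ha : ‖a‖ < 1) (hz : ‖z‖ ≤ 1) :
    1 - conj a * z ≠ 0 := by
  refine sub_ne_zero.2 fun h => ?_
  have : ‖conj a * z‖ < 1 := by
    rw [norm_mul, RCLike.norm_conj]
    nlinarith [norm_nonneg a, norm_nonneg z]
  simp [← h] at this

lemma differentiableOn_szegoKernel {a : ℂ} (ha : ‖a‖ < 1) :
    DifferentiableOn ℂ (szegoKernel a) (closedBall 0 1) :=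
  ((differentiableOn_const 1).sub (differentiableOn_id.const_mul _)).inv fun _ hz =>
    one_sub_conj_mul_ne_zero ha (mem_closedBall_zero_iff.1 hz)

lemma conj_szegoKernel_of_norm_eq_one {a z : ℂ} (ha : ‖a‖ < 1) (hz : ‖z‖ = 1) :
    conj (szegoKernel a z) = z / (z - a) := by
  have hz0 : z ≠ 0 := norm_ne_zero_iff.1 (by simp [hz])
  have hza : z - a ≠ 0 := sub_ne_zero.2 fun h => by simp [← h, hz] at ha
  rw [szegoKernel, map_inv₀, map_sub, map_one, map_mul, Complex.conj_conj,
    ← Complex.inv_eq_conj hz]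
  field_simp

lemma DiffContOnCl.continuousOn_sphere {u : ℂ → ℂ} (hu : DiffContOnCl ℂ u (ball 0 1)) :
    ContinuousOn u (sphere 0 1) :=
  hu.continuousOn.mono (by rw [closure_ball _ one_ne_zero]; exact sphere_subset_closedBall)

lemma DiffContOnCl.circleIntegrable_mul_conj {u v : ℂ → ℂ} (hu : DiffContOnCl ℂ u (ball 0 1))
    (hv : DiffContOnCl ℂ v (ball 0 1)) :
    CircleIntegrable (fun z => u z * conj (v z)) 0 1 :=
  ContinuousOn.circleIntegrable zero_le_one
    (hu.continuousOn_sphere.mul (Complex.continuous_conj.comp_continuousOn hv.continuousOn_sphere))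

lemma DifferentiableOn.diffContOnCl_comp_mul {f : ℂ → ℂ} (hf : DifferentiableOn ℂ f (ball 0 1))
    {r : ℂ} (hr : ‖r‖ < 1) : DiffContOnCl ℂ (fun z => f (r * z)) (ball 0 1) := by
  refine DifferentiableOn.diffContOnCl_ball (U := closedBall 0 1)
    (hf.comp (differentiableOn_id.const_mul r) fun z hz => ?_) subset_rfl
  rw [mem_closedBall_zero_iff] at hz
  rw [mem_ball_zero_iff, norm_mul]
  nlinarith [norm_nonneg r]

lemma circleAverage_mul_conj_szegoKernel {u : ℂ → ℂ} (hu : DiffContOnCl ℂ u (ball 0 1))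
    {a : ℂ} (ha : ‖a‖ < 1) :
    circleAverage (fun z => u z * conj (szegoKernel a z)) 0 1 = u a := by
  have hu' : DiffContOnCl ℂ u (ball 0 |1|) := by rwa [abs_one]
  rw [← hu'.circleAverage_smul_div (by simpa using ha)]
  refine circleAverage_congr_sphere fun z hz => ?_
  rw [conj_szegoKernel_of_norm_eq_one ha (by simpa using hz), sub_zero, smul_eq_mul, mul_comm]

lemma ofReal_circleAverage (f : ℂ → ℝ) (c : ℂ) (R : ℝ) :
    ((circleAverage f c R : ℝ) : ℂ) = circleAverage (fun z => (f z : ℂ)) c R := by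
  simp [circleAverage_def, intervalIntegral.integral_ofReal]

lemma two_mul_re_mul_mul_conj_le {u g h : ℂ} {M : ℝ} (hu : ‖u‖ ≤ M) :
    2 * (u * g * conj h).re ≤ ‖g‖ ^ 2 + M ^ 2 * ‖h‖ ^ 2 := by
  have hre : (u * g * conj h).re ≤ M * ‖g‖ * ‖h‖ :=
    calc (u * g * conj h).re ≤ ‖u * g * conj h‖ := Complex.re_le_norm _
      _ = ‖u‖ * ‖g‖ * ‖h‖ := by rw [norm_mul, norm_mul, RCLike.norm_conj]
      _ ≤ M * ‖g‖ * ‖h‖ := by gcongr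
  nlinarith [sq_nonneg (‖g‖ - M * ‖h‖)]

section

variable {ι : Type*} [Fintype ι]

noncomputable def szegoSum (lam c : ι → ℂ) (z : ℂ) : ℂ :=
  ∑ j, c j * szegoKernel (lam j) z

noncomputable def pickForm (lam β : ι → ℂ) : ℂ :=
  ∑ i, ∑ j, conj (β i) * β j / (1 - conj (lam i) * lam j)

lemma diffContOnCl_szegoSum {lam : ι → ℂ} (hlam : ∀ j, ‖lam j‖ < 1) (c : ι → ℂ) :
    DiffContOnCl ℂ (szegoSum lam c) (ball 0 1) :=
  DifferentiableOn.diffContOnCl_ball (U := closedBall 0 1)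
    (DifferentiableOn.fun_sum fun j _ => (differentiableOn_szegoKernel (hlam j)).const_mul _)
    subset_rfl

lemma continuous_pickForm (lam : ι → ℂ) : Continuous (pickForm lam) := by
  unfold pickForm
  fun_prop

lemma circleAverage_mul_conj_szegoSum {u : ℂ → ℂ} (hu : DiffContOnCl ℂ u (ball 0 1))
    {lam : ι → ℂ} (hlam : ∀ j, ‖lam j‖ < 1) (c : ι → ℂ) :
    circleAverage (fun z => u z * conj (szegoSum lam c z)) 0 1 = ∑ j, conj (c j) * u (lam j) := by
  have hk : ∀ j, DiffContOnCl ℂ (szegoKernel (lam j)) (ball 0 1) := fun j =>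
    DifferentiableOn.diffContOnCl_ball (differentiableOn_szegoKernel (hlam j)) subset_rfl
  simp only [szegoSum, map_sum, map_mul, Finset.mul_sum, mul_left_comm (u _)]
  rw [circleAverage_fun_sum (f := fun j z => conj (c j) * (u z * conj (szegoKernel (lam j) z)))
    fun j _ => (hu.circleIntegrable_mul_conj (hk j)).const_mul _]
  refine Finset.sum_congr rfl fun j _ => ?_
  rw [← circleAverage_mul_conj_szegoKernel hu (hlam j)]
  exact circleAverage_fun_smul (𝕜 := ℂ)

lemma pickForm_eq_circleAverage {lam : ι → ℂ} (hlam : ∀ j, ‖lam j‖ < 1) (β : ι → ℂ) :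
    pickForm lam β =
      ((circleAverage (fun z => ‖szegoSum lam (fun j => conj (β j)) z‖ ^ 2) 0 1 : ℝ) : ℂ) := by
  have hh := diffContOnCl_szegoSum hlam fun j => conj (β j)
  simp_rw [ofReal_circleAverage, Complex.ofReal_pow, ← Complex.mul_conj']
  rw [circleAverage_mul_conj_szegoSum hh hlam]
  simp only [Complex.conj_conj, szegoSum, szegoKernel, Finset.mul_sum, pickForm]
  rw [Finset.sum_comm]
  refine Finset.sum_congr rfl fun i _ => Finset.sum_congr rfl fun j _ => ?_
  ring

theorem pickForm_mul_le {u : ℂ → ℂ} (hu : DiffContOnCl ℂ u (ball 0 1)) {M : ℝ}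
    (hM : ∀ z ∈ sphere (0 : ℂ) 1, ‖u z‖ ≤ M) {lam : ι → ℂ} (hlam : ∀ j, ‖lam j‖ < 1)
    (α : ι → ℂ) :
    pickForm lam (fun i => α i * u (lam i)) ≤ ((M ^ 2 : ℝ) : ℂ) * pickForm lam α := by
  set g := szegoSum lam fun j => conj (α j * u (lam j))
  set h := szegoSum lam fun j => conj (α j)
  have hg : DiffContOnCl ℂ g (ball 0 1) := diffContOnCl_szegoSum hlam _
  have hh : DiffContOnCl ℂ h (ball 0 1) := diffContOnCl_szegoSum hlam _
  have hug : DiffContOnCl ℂ (fun z => u z * g z) (ball 0 1) :=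
    ⟨hu.differentiableOn.mul hg.differentiableOn, hu.continuousOn.mul hg.continuousOn⟩
  rw [pickForm_eq_circleAverage hlam, pickForm_eq_circleAverage hlam, ← Complex.ofReal_mul,
    Complex.real_le_real]
  have hgc := hg.continuousOn_sphere
  have hhc := hh.continuousOn_sphere
  have huc := hu.continuousOn_sphere
  set A := circleAverage (fun z => ‖g z‖ ^ 2) 0 1
  set B := circleAverage (fun z => ‖h z‖ ^ 2) 0 1
  have hpair : (A : ℂ) = circleAverage (fun z => u z * g z * conj (h z)) 0 1 := by
    have hA : (A : ℂ) = circleAverage (fun z => g z * conj (g z)) 0 1 := by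
      simp_rw [A, ofReal_circleAverage, Complex.ofReal_pow, ← Complex.mul_conj']
    rw [hA, circleAverage_mul_conj_szegoSum hg hlam, circleAverage_mul_conj_szegoSum hug hlam]
    simp only [Complex.conj_conj, mul_assoc]
  have hre : A = circleAverage (fun z => (u z * g z * conj (h z)).re) 0 1 := by
    rw [← Complex.ofReal_re A, hpair]
    exact (Complex.reCLM.circleAverage_comp_comm (hug.circleIntegrable_mul_conj hh)).symm
  have hle : 2 * A ≤ A + M ^ 2 * B :=
    calc 2 * A = circleAverage (fun z => 2 * (u z * g z * conj (h z)).re) 0 1 := by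
          rw [hre]; exact (circleAverage_fun_smul (𝕜 := ℝ)).symm
      _ ≤ circleAverage (fun z => ‖g z‖ ^ 2 + M ^ 2 * ‖h z‖ ^ 2) 0 1 := by
          refine circleAverage_mono ?_ ?_ fun z hz => two_mul_re_mul_mul_conj_le (hM z ?_)
          · exact ContinuousOn.circleIntegrable zero_le_one (by fun_prop)
          · exact ContinuousOn.circleIntegrable zero_le_one (by fun_prop)
          · simpa using hz
      _ = A + M ^ 2 * B := by
          rw [circleAverage_fun_add (ContinuousOn.circleIntegrable zero_le_one (by fun_prop))
            (ContinuousOn.circleIntegrable zero_le_one (by fun_prop))]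
          exact congrArg (A + ·) (circleAverage_fun_smul (𝕜 := ℝ))
  linarith

end

theorem stmt10_general (n : ℕ) (lam : Fin n → ℂ) (hlam : ∀ i, ‖lam i‖ < 1)
    (w : Fin n → ℂ)
    (f : ℂ → ℂ) (hf : DifferentiableOn ℂ f (Metric.ball (0 : ℂ) 1))
    (hbd : BddAbove (Set.range fun z : Metric.ball (0 : ℂ) 1 => ‖f z‖))
    (hint : ∀ i, f (lam i) = w i) (α : Fin n → ℂ) :
    ∑ i, ∑ j, conj (α i) * α j * conj (w i) * w j / (1 - conj (lam i) * lam j)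
      ≤ (((⨆ z : Metric.ball (0 : ℂ) 1, ‖f z‖) ^ 2 : ℝ) : ℂ) *
        ∑ i, ∑ j, conj (α i) * α j / (1 - conj (lam i) * lam j) := by
  have hdilate : ∀ᶠ r : ℝ in 𝓝[<] 1, pickForm lam (fun i => α i * f (r * lam i)) ≤
      (((⨆ z : ball (0 : ℂ) 1, ‖f z‖) ^ 2 : ℝ) : ℂ) * pickForm lam α := by
    filter_upwards [Ioo_mem_nhdsLT zero_lt_one] with r hr
    have hr' : ‖(r : ℂ)‖ < 1 := by simp [abs_of_pos hr.1, hr.2]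
    refine pickForm_mul_le (hf.diffContOnCl_comp_mul hr') (fun z hz => le_ciSup hbd ⟨_, ?_⟩) hlam α
    simpa [norm_mul, mem_sphere_zero_iff_norm.1 hz] using hr'
  have hlim : Tendsto (fun r : ℝ => pickForm lam fun i => α i * f (r * lam i)) (𝓝[<] 1)
      (𝓝 (pickForm lam fun i => α i * w i)) := by
    refine ((continuous_pickForm lam).tendsto _).comp (tendsto_pi_nhds.2 fun i => ?_)
    have hfc : ContinuousAt f (lam i) :=
      hf.continuousOn.continuousAt (isOpen_ball.mem_nhds (mem_ball_zero_iff.2 (hlam i)))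
    have hmul : Tendsto (fun r : ℝ => (r : ℂ) * lam i) (𝓝[<] 1) (𝓝 (lam i)) := by
      simpa using ((by fun_prop : Continuous fun r : ℝ => (r : ℂ) * lam i).tendsto 1).mono_left
        nhdsWithin_le_nhds
    simpa [hint i] using (hfc.tendsto.comp hmul).const_mul (α i)
  change _ ≤ _ * pickForm lam α
  convert le_of_tendsto hlim hdilate using 1
  refine Finset.sum_congr rfl fun i _ => Finset.sum_congr rfl fun j _ => ?_
  simp only [map_mul]
  ring

/-- lower bound in Pick's theorem: if `f` is bounded holomorphic on
the unit disk with `f(λ_i) = w_i` at distinct points of the disk, then for all `α`,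
`∑_{i,j} conj(α_i) α_j conj(w_i) w_j / (1 - conj(λ_i) λ_j)
  ≤ ‖f‖_∞² · ∑_{i,j} conj(α_i) α_j / (1 - conj(λ_i) λ_j)`
(an inequality between nonnegative reals, stated in the order of ℂ), where
`‖f‖_∞ = sup_{z ∈ 𝔻} ‖f z‖`. -/
theorem stmt10 (n : ℕ) (lam : Fin n → ℂ) (hlam : ∀ i, ‖lam i‖ < 1)
    (hdist : Function.Injective lam) (w : Fin n → ℂ)
    (f : ℂ → ℂ) (hf : DifferentiableOn ℂ f (Metric.ball (0 : ℂ) 1))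
    (hbd : BddAbove (Set.range fun z : Metric.ball (0 : ℂ) 1 => ‖f z‖))
    (hint : ∀ i, f (lam i) = w i) (α : Fin n → ℂ) :
    ∑ i, ∑ j, conj (α i) * α j * conj (w i) * w j / (1 - conj (lam i) * lam j)
      ≤ (((⨆ z : Metric.ball (0 : ℂ) 1, ‖f z‖) ^ 2 : ℝ) : ℂ) *
        ∑ i, ∑ j, conj (α i) * α j / (1 - conj (lam i) * lam j) :=
  stmt10_general n lam hlam w f hf hbd hint α
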